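/- If a smoothness condition holds, namely for all w ≥ 0 and w* > 0: w* · f(w + w*) ≤ λ · w* · f(w*) + ε · w · f(w) with ε < 1 and λ > 1 - ε, then for any Nash equilibrium outcome σ and any outcome σ* of the singleton weighted congestion game with social cost C(σ) = Σ_{x} w_x(σ) f(w_x(σ)), we have C(σ) ≤ (λ/(1-ε)) · C(σ*). -/

import Mathlib

open Finset

/-- Load on resource `x` in outcome `σ`: the sum of the weights of players choosing `x`. -/
def load {V A : Type*} [Fintype V] [DecidableEq A]
    (u : V → A → ℝ) (σ : V → A) (x : A) : ℝ :=
  ∑ i, if σ i = x then u i (σ i) else 0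

/-- Social cost `C(σ) = Σ_x w_x(σ) f(w_x(σ))`. -/
def socialCost {V A : Type*} [Fintype V] [Fintype A] [DecidableEq A]
    (u : V → A → ℝ) (f : ℝ → ℝ) (σ : V → A) : ℝ :=
  ∑ x, load u σ x * f (load u σ x)

/-!
Roughgarden's smoothness argument. Summing the Nash inequalities of all players against a
deviation to `σs` bounds `C(σ)` by `Σ_x w_x(σs) f(w_x(σ) + w_x(σs))`, and smoothness applied
resource by resource bounds this by `λ C(σs) + ε C(σ)`; solving for `C(σ)` gives the ratio
`λ / (1 - ε)`.
-/

open Filter Topology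

section Loads

variable {V A : Type*} [Fintype V] [DecidableEq A]

lemma load_nonneg {u : V → A → ℝ} (hu : ∀ i x, 0 ≤ u i x) (σ : V → A) (x : A) :
    0 ≤ load u σ x :=
  sum_nonneg fun i _ => by split_ifs <;> simp [hu]

lemma le_load_self {u : V → A → ℝ} (hu : ∀ i x, 0 ≤ u i x) (σ : V → A) (i : V) :
    u i (σ i) ≤ load u σ (σ i) := by
  simpa [load] using single_le_sum (f := fun j => if σ j = σ i then u j (σ j) else 0)
    (fun j _ => by split_ifs <;> simp [hu]) (mem_univ i)

lemma sum_load_mul [Fintype A] (u : V → A → ℝ) (τ : V → A) (g : A → ℝ) :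
    ∑ x, load u τ x * g x = ∑ i, u i (τ i) * g (τ i) := by
  simp_rw [load, sum_mul, ite_mul, zero_mul]
  rw [sum_comm]
  simp

lemma socialCost_eq_sum [Fintype A] (u : V → A → ℝ) (f : ℝ → ℝ) (σ : V → A) :
    socialCost u f σ = ∑ i, u i (σ i) * f (load u σ (σ i)) :=
  sum_load_mul u σ fun x => f (load u σ x)

end Loads

def IsSmooth (f : ℝ → ℝ) (lam ε : ℝ) : Prop :=
  ∀ w ws : ℝ, 0 ≤ w → 0 < ws → ws * f (w + ws) ≤ lam * ws * f ws + ε * w * f w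

def IsNashEquilibrium {V A : Type*} [Fintype V] [DecidableEq A]
    (u : V → A → ℝ) (f : ℝ → ℝ) (σ : V → A) : Prop :=
  ∀ i y, u i (σ i) * f (load u σ (σ i)) ≤ u i y * f (load u σ y + u i y)

namespace IsSmooth

variable {f : ℝ → ℝ} {lam ε : ℝ}

/-- Smoothness with `ws = 0` says `0 ≤ ε w f(w)`, which is not automatic when `ε < 0`. -/
lemma residual_nonneg (h : IsSmooth f lam ε) (hf : MonotoneOn f (Set.Ici 0)) (hlam : 0 < lam)
    {w : ℝ} (hw : 0 ≤ w) : 0 ≤ ε * w * f w := by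
  -- For `0 < t ≤ 1`: `t f(w) ≤ t f(w + t) ≤ λ t f(t) + ε w f(w) ≤ λ t f(w + 1) + ε w f(w)`.
  have bound : ∀ᶠ t in 𝓝[>] (0 : ℝ), t * (f w - lam * f (w + 1)) ≤ ε * w * f w := by
    filter_upwards [Ioo_mem_nhdsGT one_pos] with t ⟨ht, ht1⟩
    have h1 := h w t hw ht
    have h2 : t * f w ≤ t * f (w + t) :=
      mul_le_mul_of_nonneg_left (hf hw (show 0 ≤ w + t by linarith) (by linarith)) ht.le
    have h3 : lam * t * f t ≤ lam * t * f (w + 1) := mul_le_mul_of_nonneg_left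
      (hf ht.le (show 0 ≤ w + 1 by linarith) (by linarith)) (by positivity)
    linarith
  have lim : Tendsto (fun t => t * (f w - lam * f (w + 1))) (𝓝[>] 0) (𝓝 0) :=
    ((continuous_mul_const _).tendsto' 0 0 (zero_mul _)).mono_left nhdsWithin_le_nhds
  exact le_of_tendsto lim bound

lemma apply_of_nonneg (h : IsSmooth f lam ε) (hf : MonotoneOn f (Set.Ici 0)) (hlam : 0 < lam)
    {w ws : ℝ} (hw : 0 ≤ w) (hws : 0 ≤ ws) :
    ws * f (w + ws) ≤ lam * ws * f ws + ε * w * f w := by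
  rcases hws.lt_or_eq with hws | rfl
  · exact h w ws hw hws
  · simpa using h.residual_nonneg hf hlam hw

end IsSmooth

section Game

variable {V A : Type*} [Fintype V] [Fintype A] [DecidableEq A]
  {u : V → A → ℝ} {f : ℝ → ℝ}

lemma IsNashEquilibrium.socialCost_le (hu : ∀ i x, 0 ≤ u i x) (hf : MonotoneOn f (Set.Ici 0))
    {σ : V → A} (hσ : IsNashEquilibrium u f σ) (σs : V → A) :
    socialCost u f σ ≤ ∑ x, load u σs x * f (load u σ x + load u σs x) := by
  rw [socialCost_eq_sum, sum_load_mul]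
  refine sum_le_sum fun i _ => (hσ i (σs i)).trans ?_
  gcongr
  · exact hu _ _
  · have hw := load_nonneg hu σ (σs i)
    have hui := hu i (σs i)
    have hle := le_load_self hu σs i
    exact hf (show 0 ≤ load u σ (σs i) + u i (σs i) by linarith)
      (show 0 ≤ load u σ (σs i) + load u σs (σs i) by linarith) (by linarith)

lemma IsSmooth.sum_load_mul_le (hu : ∀ i x, 0 ≤ u i x) (hf : MonotoneOn f (Set.Ici 0)) {lam ε : ℝ}
    (h : IsSmooth f lam ε) (hlam : 0 < lam) (σ σs : V → A) :
    ∑ x, load u σs x * f (load u σ x + load u σs x) ≤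
      lam * socialCost u f σs + ε * socialCost u f σ := by
  rw [socialCost, socialCost, mul_sum, mul_sum, ← sum_add_distrib]
  refine sum_le_sum fun x _ => ?_
  linarith [h.apply_of_nonneg hf hlam (load_nonneg hu σ x) (load_nonneg hu σs x)]

end Game

theorem stmt_2_general {V A : Type*} [Fintype V] [Fintype A] [DecidableEq A]
    (u : V → A → ℝ) (hu : ∀ i x, 0 < u i x)
    (f : ℝ → ℝ)
    (hf_mono : ∀ w₁ w₂ : ℝ, 0 ≤ w₁ → w₁ ≤ w₂ → f w₁ ≤ f w₂)
    (lam ε : ℝ) (hε : ε < 1) (hlam : 1 - ε < lam)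
    (smooth : ∀ w ws : ℝ, 0 ≤ w → 0 < ws →
      ws * f (w + ws) ≤ lam * ws * f ws + ε * w * f w)
    (σ σs : V → A)
    (hNash : ∀ i y, u i (σ i) * f (load u σ (σ i)) ≤ u i y * f (load u σ y + u i y)) :
    socialCost u f σ ≤ (lam / (1 - ε)) * socialCost u f σs := by
  have hu' : ∀ i x, 0 ≤ u i x := fun i x => (hu i x).le
  have hf : MonotoneOn f (Set.Ici 0) := fun a ha b _ hab => hf_mono a b ha hab
  have nash := IsNashEquilibrium.socialCost_le hu' hf hNash σs
  have smoothness := IsSmooth.sum_load_mul_le hu' hf smooth (by linarith) σ σs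
  rw [div_mul_eq_mul_div, le_div_iff₀ (by linarith)]
  linarith

theorem stmt_2 {V A : Type*} [Fintype V] [Fintype A] [DecidableEq A]
    (u : V → A → ℝ) (hu : ∀ i x, 0 < u i x)
    (f : ℝ → ℝ)
    (hf_mono : ∀ w₁ w₂ : ℝ, 0 ≤ w₁ → w₁ ≤ w₂ → f w₁ ≤ f w₂)
    (hf_nonneg : ∀ w : ℝ, 0 ≤ w → 0 ≤ f w)
    (lam ε : ℝ) (hε : ε < 1) (hlam : 1 - ε < lam)
    (smooth : ∀ w ws : ℝ, 0 ≤ w → 0 < ws →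
      ws * f (w + ws) ≤ lam * ws * f ws + ε * w * f w)
    (σ σs : V → A)
    (hNash : ∀ i y, u i (σ i) * f (load u σ (σ i)) ≤ u i y * f (load u σ y + u i y)) :
    socialCost u f σ ≤ (lam / (1 - ε)) * socialCost u f σs :=
  stmt_2_general u hu f hf_mono lam ε hε hlam smooth σ σs hNash
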